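/- Let C be an essentially small extriangulated category with a generator (respectively cogenerator) G. Then there are one-to-one correspondences between the following three sets: (1) dense G-resolving subcategories of C; (2) dense G-coresolving subcategories of C; (3) subgroups of K_0(C) containing the image of G. The correspondence between (1) and (3) sends a dense G-resolving subcategory X to the subgroup ⟨[X] | X ∈ X⟩, with inverse sending a subgroup H to {A ∈ C | [A] ∈ H}. -/

import Mathlib

open CategoryTheory CategoryTheory.Limits Opposite ZeroObject

attribute [local instance] CategoryTheory.Limits.hasBinaryBiproducts_of_finite_biproducts

universe w v u

noncomputable section

/-- An object of a preadditive category with finite biproducts is *indecomposable* if it is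
nonzero and admits no nontrivial direct sum decomposition. -/
def Indec {C : Type u} [Category.{v} C] [Preadditive C] [HasFiniteBiproducts C] (X : C) : Prop :=
  ¬ IsZero X ∧ ∀ (Y Z : C), Nonempty (X ≅ Y ⊞ Z) → IsZero Y ∨ IsZero Z

/-- A preadditive category is *Krull-Schmidt* if every object is (isomorphic to) a finite
biproduct of objects having local endomorphism rings. -/
def IsKrullSchmidt (C : Type u) [Category.{v} C] [Preadditive C] [HasFiniteBiproducts C] : Prop :=
  ∀ X : C, ∃ (n : ℕ) (f : Fin n → C),
    (∀ i, IsLocalRing (CategoryTheory.End (f i))) ∧ Nonempty (X ≅ ⨁ f)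

/-- `C` is *locally finite*: for every indecomposable `A` there are, up to isomorphism, only
finitely many indecomposables `B` with `Hom(A, B) ≠ 0`, and only finitely many indecomposables
`B` with `Hom(B, A) ≠ 0`. -/
def LocFinite (C : Type u) [Category.{v} C] [Preadditive C] [HasFiniteBiproducts C] : Prop :=
  ∀ A : C, Indec A →
    (∃ (n : ℕ) (ind : Fin n → C), ∀ B : C, Indec B → (∃ φ : A ⟶ B, φ ≠ 0) →
        ∃ i, Nonempty (B ≅ ind i)) ∧
    (∃ (n : ℕ) (ind : Fin n → C), ∀ B : C, Indec B → (∃ φ : B ⟶ A, φ ≠ 0) →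
        ∃ i, Nonempty (B ≅ ind i))

/-- `X` is a *dense* subcategory: `add X = C`, i.e. every object of `C` is a direct summand
of an object of `X`. -/
def DenseSub {C : Type u} [Category.{v} C] [Preadditive C] [HasFiniteBiproducts C]
    (X : Set C) : Prop :=
  ∀ A : C, ∃ X₀ ∈ X, ∃ B : C, Nonempty (X₀ ≅ A ⊞ B)

/-- `X` is a full additive subcategory closed under isomorphisms (given as a set of objects). -/
def AddSub (C : Type u) [Category.{v} C] [Preadditive C] [HasFiniteBiproducts C]
    (X : Set C) : Prop :=
  (0 : C) ∈ X ∧ (∀ {A B : C}, A ∈ X → B ∈ X → (A ⊞ B) ∈ X) ∧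
    (∀ {A B : C}, A ∈ X → Nonempty (A ≅ B) → B ∈ X)

section ExtCatDef

variable (C : Type u) [Category.{v} C] [Preadditive C] [HasFiniteBiproducts C]

/-- An extriangulated structure (in the sense of Nakaoka–Palu) on the additive category `C`:
a biadditive functor `E : Cᵒᵖ × C → Ab` together with an additive realization `real` of
extensions by conflations, satisfying (ET1)–(ET4) and their duals. -/
structure ExtCat where
  /-- the biadditive functor `E : Cᵒᵖ × C → Ab`. -/
  E : Cᵒᵖ ⥤ C ⥤ AddCommGrpCat.{v}
  additive₁ : E.Additive
  additive₂ : ∀ c : Cᵒᵖ, (E.obj c).Additive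
  /-- `real x y δ` says that the sequence `x, y` realizes the extension `δ`, i.e.
  `(x, y, δ)` is an `E`-triangle. -/
  real : ∀ {a b c : C}, (a ⟶ b) → (b ⟶ c) → ((E.obj (op c)).obj a) → Prop
  /-- every extension is realized by some conflation. -/
  real_exists : ∀ {a c : C} (δ : (E.obj (op c)).obj a),
    ∃ (b : C) (x : a ⟶ b) (y : b ⟶ c), real x y δ
  /-- the realization is well defined on equivalence classes of sequences. -/
  real_congr : ∀ {a b b' c : C} {x : a ⟶ b} {y : b ⟶ c} {x' : a ⟶ b'} {y' : b' ⟶ c}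
    {δ : (E.obj (op c)).obj a} (e : b ≅ b'),
      x ≫ e.hom = x' → e.hom ≫ y' = y → real x y δ → real x' y' δ
  /-- any two realizations of the same extension are equivalent sequences. -/
  real_unique : ∀ {a b b' c : C} {x : a ⟶ b} {y : b ⟶ c} {x' : a ⟶ b'} {y' : b' ⟶ c}
    {δ : (E.obj (op c)).obj a}, real x y δ → real x' y' δ →
      ∃ e : b ≅ b', x ≫ e.hom = x' ∧ e.hom ≫ y' = y
  /-- (ET2) realization of morphisms of extensions: if `f_* δ = g^* δ'` then `(f, g)` extends to
  a morphism of the realizing `E`-triangles. -/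
  real_lift : ∀ {a b c a' b' c' : C} {x : a ⟶ b} {y : b ⟶ c} {x' : a' ⟶ b'} {y' : b' ⟶ c'}
    {δ : (E.obj (op c)).obj a} {δ' : (E.obj (op c')).obj a'} (f : a ⟶ a') (g : c ⟶ c'),
      real x y δ → real x' y' δ' →
      ((E.obj (op c)).map f) δ = ((E.map g.op).app a') δ' →
      ∃ m : b ⟶ b', x ≫ m = f ≫ x' ∧ m ≫ y' = y ≫ g
  /-- the realization is additive, part (i): split extensions are realized by split sequences. -/
  real_zero : ∀ a c : C,
    real (biprod.inl : a ⟶ a ⊞ c) (biprod.snd : a ⊞ c ⟶ c) (0 : (E.obj (op c)).obj a)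
  /-- the realization is additive, part (ii): it commutes with direct sums. -/
  real_sum : ∀ {a b c a' b' c' : C} {x : a ⟶ b} {y : b ⟶ c} {x' : a' ⟶ b'} {y' : b' ⟶ c'}
    {δ : (E.obj (op c)).obj a} {δ' : (E.obj (op c')).obj a'},
      real x y δ → real x' y' δ' →
      real (biprod.map x x') (biprod.map y y')
        (((E.map (biprod.fst : c ⊞ c' ⟶ c).op).app (a ⊞ a'))
            (((E.obj (op c)).map (biprod.inl : a ⟶ a ⊞ a')) δ) +
         ((E.map (biprod.snd : c ⊞ c' ⟶ c').op).app (a ⊞ a'))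
            (((E.obj (op c')).map (biprod.inr : a' ⟶ a ⊞ a')) δ'))
  /-- (ET3). -/
  et3 : ∀ {a b c a' b' c' : C} {x : a ⟶ b} {y : b ⟶ c} {x' : a' ⟶ b'} {y' : b' ⟶ c'}
    {δ : (E.obj (op c)).obj a} {δ' : (E.obj (op c')).obj a'} (f : a ⟶ a') (m : b ⟶ b'),
      real x y δ → real x' y' δ' → x ≫ m = f ≫ x' →
      ∃ g : c ⟶ c', y ≫ g = m ≫ y' ∧ ((E.obj (op c)).map f) δ = ((E.map g.op).app a') δ'
  /-- (ET3)ᵒᵖ. -/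
  et3op : ∀ {a b c a' b' c' : C} {x : a ⟶ b} {y : b ⟶ c} {x' : a' ⟶ b'} {y' : b' ⟶ c'}
    {δ : (E.obj (op c)).obj a} {δ' : (E.obj (op c')).obj a'} (g : c ⟶ c') (m : b ⟶ b'),
      real x y δ → real x' y' δ' → m ≫ y' = y ≫ g →
      ∃ f : a ⟶ a', x ≫ m = f ≫ x' ∧ ((E.obj (op c)).map f) δ = ((E.map g.op).app a') δ'
  /-- (ET4). -/
  et4 : ∀ {A B D F G : C} {f : A ⟶ B} {f' : B ⟶ D} {g : B ⟶ G} {g' : G ⟶ F}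
    {δ : (E.obj (op D)).obj A} {δ' : (E.obj (op F)).obj B},
      real f f' δ → real g g' δ' →
      ∃ (Eo : C) (d : D ⟶ Eo) (e : Eo ⟶ F) (h' : G ⟶ Eo) (δ'' : (E.obj (op Eo)).obj A),
        real (f ≫ g) h' δ'' ∧ f' ≫ d = g ≫ h' ∧ h' ≫ e = g' ∧
        real d e (((E.obj (op F)).map f') δ') ∧
        ((E.map d.op).app A) δ'' = δ ∧
        ((E.obj (op Eo)).map f) δ'' = ((E.map e.op).app B) δ'
  /-- (ET4)ᵒᵖ. -/
  et4op : ∀ {A B D F Cc : C} {f' : D ⟶ A} {f : A ⟶ B} {g' : F ⟶ B} {g : B ⟶ Cc}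
    {δ : (E.obj (op B)).obj D} {δ' : (E.obj (op Cc)).obj F},
      real f' f δ → real g' g δ' →
      ∃ (Eo : C) (d : D ⟶ Eo) (e : Eo ⟶ F) (h' : Eo ⟶ A) (δ'' : (E.obj (op Cc)).obj Eo),
        real h' (f ≫ g) δ'' ∧ d ≫ h' = f' ∧ h' ≫ f = e ≫ g' ∧
        real d e (((E.map g'.op).app D) δ) ∧
        ((E.obj (op Cc)).map e) δ'' = δ' ∧
        ((E.obj (op B)).map d) δ = ((E.map g.op).app Eo) δ''

end ExtCatDef

namespace ExtCat

variable {C : Type u} [Category.{v} C] [Preadditive C] [HasFiniteBiproducts C]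
variable (ξ : ExtCat C)

/-- The extension group `E(c, a)`. -/
abbrev Ext (c a : C) : Type v := (ξ.E.obj (op c)).obj a

/-- Pushforward `f_* : E(c, a) → E(c, a')` along `f : a ⟶ a'`. -/
def push (c : C) {a a' : C} (f : a ⟶ a') (δ : ξ.Ext c a) : ξ.Ext c a' :=
  ((ξ.E.obj (op c)).map f) δ

/-- Pullback `g^* : E(c, a) → E(c', a)` along `g : c' ⟶ c`. -/
def pull (a : C) {c c' : C} (g : c' ⟶ c) (δ : ξ.Ext c a) : ξ.Ext c' a :=
  ((ξ.E.map g.op).app a) δ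

/-- An object `P` is projective if `E(P, A) = 0` for all `A`. -/
def ProjObj (P : C) : Prop := ∀ (A : C) (δ : ξ.Ext P A), δ = 0

/-- An object `I` is injective if `E(A, I) = 0` for all `A`. -/
def InjObj (I : C) : Prop := ∀ (A : C) (δ : ξ.Ext A I), δ = 0

end ExtCat

section SubcatDefs

variable {C : Type u} [Category.{v} C] [Preadditive C] [HasFiniteBiproducts C]

/-- `X` is closed under cones of inflations: for every `E`-triangle `A ⟶ B ⟶ C --δ-->` with
`A, B ∈ X` one has `C ∈ X`. -/
def ConeClosed (ξ : ExtCat C) (X : Set C) : Prop :=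
  ∀ {A B Cc : C} (f : A ⟶ B) (g : B ⟶ Cc) (δ : ξ.Ext Cc A),
    ξ.real f g δ → A ∈ X → B ∈ X → Cc ∈ X

/-- `X` is closed under cocones of deflations: for every `E`-triangle `A ⟶ B ⟶ C --δ-->` with
`B, C ∈ X` one has `A ∈ X`. -/
def CoconeClosed (ξ : ExtCat C) (X : Set C) : Prop :=
  ∀ {A B Cc : C} (f : A ⟶ B) (g : B ⟶ Cc) (δ : ξ.Ext Cc A),
    ξ.real f g δ → B ∈ X → Cc ∈ X → A ∈ X

/-- `X` is closed under extensions. -/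
def ExtClosed (ξ : ExtCat C) (X : Set C) : Prop :=
  ∀ {A B Cc : C} (f : A ⟶ B) (g : B ⟶ Cc) (δ : ξ.Ext Cc A),
    ξ.real f g δ → A ∈ X → Cc ∈ X → B ∈ X

/-- `G` is a generator of `C`: every object `A` admits an `E`-triangle `A₁ ⟶ G₀ ⟶ A --δ-->`
with `G₀ ∈ G`. -/
def IsGenerator (ξ : ExtCat C) (G : Set C) : Prop :=
  ∀ A : C, ∃ G₀ ∈ G, ∃ (A₁ : C) (f : A₁ ⟶ G₀) (g : G₀ ⟶ A) (δ : ξ.Ext A A₁), ξ.real f g δ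

/-- `G` is a cogenerator of `C`: every object `A` admits an `E`-triangle
`A ⟶ G₀ ⟶ A₁ --θ-->` with `G₀ ∈ G`. -/
def IsCogenerator (ξ : ExtCat C) (G : Set C) : Prop :=
  ∀ A : C, ∃ G₀ ∈ G, ∃ (A₁ : C) (f : A ⟶ G₀) (g : G₀ ⟶ A₁) (δ : ξ.Ext A₁ A), ξ.real f g δ

/-- `X` is a `G`-resolving subcategory. -/
def GResolving (ξ : ExtCat C) (G X : Set C) : Prop :=
  AddSub C X ∧ ExtClosed ξ X ∧ CoconeClosed ξ X ∧ G ⊆ X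

/-- `X` is a `G`-coresolving subcategory. -/
def GCoresolving (ξ : ExtCat C) (G X : Set C) : Prop :=
  AddSub C X ∧ ExtClosed ξ X ∧ ConeClosed ξ X ∧ G ⊆ X

end SubcatDefs

section K0Defs

variable (C : Type u) [Category.{v} C] [Preadditive C] [HasFiniteBiproducts C]

/-- The relations `[A] + [B] - [A ⊞ B]` and `[A] - [B]` for `A ≅ B`, defining `K₀(C, 0)`. -/
def relAdd : Set (FreeAbelianGroup C) :=
  {x | (∃ A B : C,
          x = FreeAbelianGroup.of A + FreeAbelianGroup.of B - FreeAbelianGroup.of (A ⊞ B)) ∨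
       (∃ A B : C, Nonempty (A ≅ B) ∧ x = FreeAbelianGroup.of A - FreeAbelianGroup.of B)}

/-- `K₀(C, 0)`: the free abelian group on the isomorphism classes of objects of `C`. -/
abbrev K0Zero := FreeAbelianGroup C ⧸ AddSubgroup.closure (relAdd C)

/-- The class `[A]` of an object `A` in `K₀(C, 0)`. -/
def clsZero (A : C) : K0Zero C := QuotientAddGroup.mk (FreeAbelianGroup.of A)

/-- The set of elements `[δ] = [A] + [C] - [B]` of `K₀(C, 0)` for all `E`-triangles
`A ⟶ B ⟶ C --δ-->`. -/
def conflRel (ξ : ExtCat C) : Set (K0Zero C) :=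
  {x | ∃ (A B Cc : C) (f : A ⟶ B) (g : B ⟶ Cc) (δ : ξ.Ext Cc A),
        ξ.real f g δ ∧ x = clsZero C A + clsZero C Cc - clsZero C B}

/-- The Grothendieck group `K₀(C)` of the extriangulated category. -/
abbrev K0Ext (ξ : ExtCat C) := K0Zero C ⧸ AddSubgroup.closure (conflRel C ξ)

/-- The canonical epimorphism `ψ : K₀(C, 0) → K₀(C)`. -/
def psiExt (ξ : ExtCat C) : K0Zero C →+ K0Ext C ξ := QuotientAddGroup.mk' _

/-- The class `[A]` of an object `A` in `K₀(C)`. -/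
def k0clsE (ξ : ExtCat C) (A : C) : K0Ext C ξ := psiExt C ξ (clsZero C A)

end K0Defs

/-!
A subgroup `H ⊇ [G]` of `K₀(C)` gives the subcategory `{A | [A] ∈ H}`, which is closed under
extensions, cones and cocones, and is dense because a generator or cogenerator writes every
`[A]` as `[G₀] - [A₁]`.

Conversely let `X` be dense, additive, extension-closed and closed under cancelling summands
from `X` (which follows from closure under cones or under cocones). Following Thomason, objects
modulo stable isomorphism relative to `X` (`A ~ B` iff `A ⊞ P ≅ B ⊞ Q` with `P, Q ∈ X`) form an
abelian group under `⊞`, inverses coming from density. The class map factors through `K₀(C)`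
and kills `⟨[X]⟩`, while its kernel on objects is exactly `X`; hence `X = {A | [A] ∈ ⟨[X]⟩}`.
Since every `{A | [A] ∈ H}` is closed under both cones and cocones, this also identifies dense
`G`-resolving with dense `G`-coresolving subcategories.
-/

section StableQuotient

variable {C : Type u} [Category.{v} C] [Preadditive C] [HasFiniteBiproducts C]

def biprodBiprodBiprodComm (A B D E : C) : (A ⊞ B) ⊞ (D ⊞ E) ≅ (A ⊞ D) ⊞ (B ⊞ E) :=
  biprod.associator A B (D ⊞ E) ≪≫
    biprod.mapIso (Iso.refl A)
      ((biprod.associator B D E).symm ≪≫ biprod.mapIso (biprod.braiding B D) (Iso.refl E) ≪≫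
        biprod.associator D B E) ≪≫ (biprod.associator A D (B ⊞ E)).symm

lemma DenseSub.exists_biprod_mem {X : Set C} (hD : DenseSub X) (hX : AddSub C X) (A : C) :
    ∃ B : C, (A ⊞ B) ∈ X := by
  obtain ⟨X₀, hX₀, B, e⟩ := hD A
  exact ⟨B, hX.2.2 hX₀ e⟩

def StablyIsoRel (X : Set C) (A B : C) : Prop :=
  ∃ P ∈ X, ∃ Q ∈ X, Nonempty (A ⊞ P ≅ B ⊞ Q)

namespace StablyIsoRel

variable {X : Set C} {A B D A' B' : C}

lemma of_iso (hX : AddSub C X) (e : A ≅ B) : StablyIsoRel X A B :=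
  ⟨0, hX.1, 0, hX.1, ⟨biprod.mapIso e (Iso.refl 0)⟩⟩

lemma symm : StablyIsoRel X A B → StablyIsoRel X B A := by
  rintro ⟨P, hP, Q, hQ, ⟨e⟩⟩
  exact ⟨Q, hQ, P, hP, ⟨e.symm⟩⟩

lemma trans (hX : AddSub C X) :
    StablyIsoRel X A B → StablyIsoRel X B D → StablyIsoRel X A D := by
  rintro ⟨P, hP, Q, hQ, ⟨e₁⟩⟩ ⟨R, hR, S, hS, ⟨e₂⟩⟩
  refine ⟨P ⊞ R, hX.2.1 hP hR, S ⊞ Q, hX.2.1 hS hQ, ⟨?_⟩⟩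
  calc A ⊞ (P ⊞ R) ≅ (A ⊞ P) ⊞ R := (biprod.associator _ _ _).symm
    _ ≅ (B ⊞ Q) ⊞ R := biprod.mapIso e₁ (Iso.refl R)
    _ ≅ B ⊞ (R ⊞ Q) :=
        biprod.associator _ _ _ ≪≫ biprod.mapIso (Iso.refl B) (biprod.braiding Q R)
    _ ≅ (D ⊞ S) ⊞ Q := (biprod.associator _ _ _).symm ≪≫ biprod.mapIso e₂ (Iso.refl Q)
    _ ≅ D ⊞ (S ⊞ Q) := biprod.associator _ _ _

lemma equivalence (hX : AddSub C X) : Equivalence (StablyIsoRel X) :=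
  ⟨fun A => of_iso hX (Iso.refl A), symm, trans hX⟩

lemma biprod (hX : AddSub C X) (h₁ : StablyIsoRel X A A') (h₂ : StablyIsoRel X B B') :
    StablyIsoRel X (A ⊞ B) (A' ⊞ B') := by
  obtain ⟨P, hP, Q, hQ, ⟨e₁⟩⟩ := h₁
  obtain ⟨R, hR, S, hS, ⟨e₂⟩⟩ := h₂
  exact ⟨P ⊞ R, hX.2.1 hP hR, Q ⊞ S, hX.2.1 hQ hS, ⟨biprodBiprodBiprodComm _ _ _ _ ≪≫
    biprod.mapIso e₁ e₂ ≪≫ biprodBiprodBiprodComm _ _ _ _⟩⟩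

end StablyIsoRel

abbrev StableQuot (X : Set C) : Type u := Quot (StablyIsoRel X)

namespace StableQuot

variable {X : Set C} [hX : Fact (AddSub C X)]

instance : Zero (StableQuot X) := ⟨Quot.mk _ 0⟩

instance : Add (StableQuot X) :=
  ⟨Quot.lift₂ (fun A B => Quot.mk _ (A ⊞ B))
    (fun A _ _ h => Quot.sound ((StablyIsoRel.of_iso hX.out (Iso.refl A)).biprod hX.out h))
    (fun _ _ B h => Quot.sound (h.biprod hX.out (StablyIsoRel.of_iso hX.out (Iso.refl B))))⟩

instance : AddCommMonoid (StableQuot X) where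
  add_assoc := by
    rintro ⟨A⟩ ⟨B⟩ ⟨D⟩
    exact Quot.sound (.of_iso hX.out (biprod.associator A B D))
  zero_add := by
    rintro ⟨A⟩
    exact Quot.sound (.of_iso hX.out (isoZeroBiprod (isZero_zero C)).symm)
  add_zero := by
    rintro ⟨A⟩
    exact Quot.sound (.of_iso hX.out (isoBiprodZero (isZero_zero C)).symm)
  add_comm := by
    rintro ⟨A⟩ ⟨B⟩
    exact Quot.sound (.of_iso hX.out (biprod.braiding A B))
  nsmul := nsmulRec

lemma mk_biprod (A B : C) :
    (Quot.mk _ (A ⊞ B) : StableQuot X) = Quot.mk _ A + Quot.mk _ B := rfl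

lemma mk_eq_zero_of_mem {A : C} (hA : A ∈ X) : (Quot.mk _ A : StableQuot X) = 0 :=
  Quot.sound ⟨0, hX.out.1, A, hA,
    ⟨(isoBiprodZero (isZero_zero C)).symm ≪≫ isoZeroBiprod (isZero_zero C)⟩⟩

lemma mem_of_mk_eq_zero (hcancel : ∀ {A P : C}, P ∈ X → (A ⊞ P) ∈ X → A ∈ X) {A : C}
    (hA : (Quot.mk _ A : StableQuot X) = 0) : A ∈ X := by
  obtain ⟨P, hP, Q, hQ, ⟨e⟩⟩ :=
    (StablyIsoRel.equivalence hX.out).eqvGen_iff.mp (Quot.eqvGen_exact hA)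
  exact hcancel hP (hX.out.2.2 (hX.out.2.1 hX.out.1 hQ) ⟨e.symm⟩)

variable [hD : Fact (DenseSub X)]

variable (X) in
noncomputable def complement (A : C) : C := (hD.out.exists_biprod_mem hX.out A).choose

lemma biprod_complement_mem (A : C) : (A ⊞ complement X A) ∈ X :=
  (hD.out.exists_biprod_mem hX.out A).choose_spec

lemma mk_add_mk_complement (A : C) :
    (Quot.mk _ A : StableQuot X) + Quot.mk _ (complement X A) = 0 :=
  mk_eq_zero_of_mem (biprod_complement_mem A)

noncomputable instance : Neg (StableQuot X) :=
  ⟨Quot.lift (fun A => Quot.mk _ (complement X A)) fun A B h =>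
    left_neg_eq_right_neg (by rw [add_comm]; exact mk_add_mk_complement A)
      (by rw [Quot.sound h]; exact mk_add_mk_complement B)⟩

noncomputable instance : AddCommGroup (StableQuot X) where
  zsmul := zsmulRec
  neg_add_cancel := by
    rintro ⟨A⟩
    exact (add_comm _ _).trans (mk_add_mk_complement A)

lemma mk_add_mk_of_real (ξ : ExtCat C) (hExt : ExtClosed ξ X) {A B Cc : C} {f : A ⟶ B}
    {g : B ⟶ Cc} {δ : ξ.Ext Cc A} (h : ξ.real f g δ) :
    (Quot.mk _ A : StableQuot X) + Quot.mk _ Cc = Quot.mk _ B := by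
  -- `B ⊞ (A' ⊞ C')` is an extension of `C ⊞ C'` by `A ⊞ A'` for the complements `A'`, `C'`
  have hsum := hExt _ _ _ (ξ.real_sum h (ξ.real_zero (complement X A) (complement X Cc)))
    (biprod_complement_mem A) (biprod_complement_mem Cc)
  have hB := mk_eq_zero_of_mem hsum
  rw [mk_biprod, mk_biprod] at hB
  rw [eq_neg_of_add_eq_zero_left (mk_add_mk_complement (X := X) A),
    eq_neg_of_add_eq_zero_left (mk_add_mk_complement (X := X) Cc),
    eq_neg_of_add_eq_zero_left hB]
  abel

end StableQuot

end StableQuotient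

section GrothendieckGroup

variable {C : Type u} [Category.{v} C] [Preadditive C] [HasFiniteBiproducts C] (ξ : ExtCat C)

lemma k0clsE_add_of_real {A B Cc : C} {f : A ⟶ B} {g : B ⟶ Cc} {δ : ξ.Ext Cc A}
    (h : ξ.real f g δ) : k0clsE C ξ A + k0clsE C ξ Cc = k0clsE C ξ B := by
  rw [← sub_eq_zero]
  simp only [k0clsE, ← map_add, ← map_sub]
  exact (QuotientAddGroup.eq_zero_iff _).mpr
    (AddSubgroup.subset_closure ⟨A, B, Cc, f, g, δ, h, rfl⟩)

lemma k0clsE_biprod (A B : C) : k0clsE C ξ (A ⊞ B) = k0clsE C ξ A + k0clsE C ξ B :=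
  (k0clsE_add_of_real ξ (ξ.real_zero A B)).symm

lemma k0clsE_eq_of_iso {A B : C} (e : A ≅ B) : k0clsE C ξ A = k0clsE C ξ B := by
  have h : clsZero C A - clsZero C B = 0 := by
    rw [clsZero, clsZero, ← QuotientAddGroup.mk_sub, QuotientAddGroup.eq_zero_iff]
    exact AddSubgroup.subset_closure (Or.inr ⟨A, B, ⟨e⟩, rfl⟩)
  rw [k0clsE, k0clsE, ← sub_eq_zero, ← map_sub, h, map_zero]

lemma k0clsE_zero : k0clsE C ξ (0 : C) = 0 := by
  have h := k0clsE_biprod ξ (0 : C) 0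
  rwa [← k0clsE_eq_of_iso ξ (isoBiprodZero (isZero_zero C)), left_eq_add] at h

lemma exists_eq_k0clsE_sub (x : K0Ext C ξ) : ∃ A B : C, x = k0clsE C ξ A - k0clsE C ξ B := by
  induction x using QuotientAddGroup.induction_on with | H y => ?_
  induction y using QuotientAddGroup.induction_on with | H z => ?_
  induction z using FreeAbelianGroup.induction_on with
  | zero => exact ⟨0, 0, by simp⟩
  | of A => exact ⟨A, 0, by rw [k0clsE_zero, sub_zero]; rfl⟩
  | neg A _ => exact ⟨0, A, by rw [k0clsE_zero, zero_sub]; rfl⟩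
  | add x y hx hy =>
    obtain ⟨A, B, hx⟩ := hx
    obtain ⟨A', B', hy⟩ := hy
    refine ⟨A ⊞ A', B ⊞ B', ?_⟩
    rw [QuotientAddGroup.mk_add, QuotientAddGroup.mk_add, hx, hy, k0clsE_biprod, k0clsE_biprod]
    abel

def K0Ext.lift {M : Type*} [AddCommGroup M] (φ : C → M)
    (hiso : ∀ {A B : C}, (A ≅ B) → φ A = φ B)
    (hreal : ∀ {A B Cc : C} {f : A ⟶ B} {g : B ⟶ Cc} {δ : ξ.Ext Cc A}, ξ.real f g δ →
      φ A + φ Cc = φ B) : K0Ext C ξ →+ M :=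
  QuotientAddGroup.lift _
    (QuotientAddGroup.lift _ (FreeAbelianGroup.lift φ) <| by
      rw [AddSubgroup.closure_le]
      rintro _ (⟨A, B, rfl⟩ | ⟨A, B, ⟨e⟩, rfl⟩)
      · simp [FreeAbelianGroup.lift_apply_of, ← hreal (ξ.real_zero A B)]
      · simp [FreeAbelianGroup.lift_apply_of, hiso e])
    (by
      rw [AddSubgroup.closure_le]
      rintro _ ⟨A, B, Cc, f, g, δ, h, rfl⟩
      simp [clsZero, FreeAbelianGroup.lift_apply_of, ← hreal h])

lemma K0Ext.lift_k0clsE {M : Type*} [AddCommGroup M] (φ : C → M)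
    (hiso : ∀ {A B : C}, (A ≅ B) → φ A = φ B)
    (hreal : ∀ {A B Cc : C} {f : A ⟶ B} {g : B ⟶ Cc} {δ : ξ.Ext Cc A}, ξ.real f g δ →
      φ A + φ Cc = φ B) (A : C) :
    K0Ext.lift ξ φ hiso hreal (k0clsE C ξ A) = φ A :=
  FreeAbelianGroup.lift_apply_of φ A

end GrothendieckGroup

section Correspondence

variable {C : Type u} [Category.{v} C] [Preadditive C] [HasFiniteBiproducts C] {ξ : ExtCat C}

lemma CoconeClosed.mem_of_biprod_mem {X : Set C} (hX : CoconeClosed ξ X) {A P : C}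
    (hP : P ∈ X) (hAP : (A ⊞ P) ∈ X) : A ∈ X :=
  hX biprod.inl biprod.snd 0 (ξ.real_zero A P) hAP hP

lemma ConeClosed.mem_of_biprod_mem {X : Set C} (hX : ConeClosed ξ X) (hAdd : AddSub C X)
    {A P : C} (hP : P ∈ X) (hAP : (A ⊞ P) ∈ X) : A ∈ X :=
  hX biprod.inl biprod.snd 0 (ξ.real_zero P A) hP (hAdd.2.2 hAP ⟨biprod.braiding A P⟩)

theorem setOf_k0clsE_mem_closure_eq {X : Set C} (hD : DenseSub X) (hAdd : AddSub C X)
    (hExt : ExtClosed ξ X) (hcancel : ∀ {A P : C}, P ∈ X → (A ⊞ P) ∈ X → A ∈ X) :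
    {A : C | k0clsE C ξ A ∈ AddSubgroup.closure (k0clsE C ξ '' X)} = X := by
  have : Fact (AddSub C X) := ⟨hAdd⟩
  have : Fact (DenseSub X) := ⟨hD⟩
  let φ := K0Ext.lift ξ (fun A => (Quot.mk _ A : StableQuot X))
    (fun e => Quot.sound (.of_iso hAdd e)) (StableQuot.mk_add_mk_of_real ξ hExt)
  have hker : AddSubgroup.closure (k0clsE C ξ '' X) ≤ φ.ker := by
    rw [AddSubgroup.closure_le]
    rintro _ ⟨P, hP, rfl⟩
    exact (K0Ext.lift_k0clsE ξ _ _ _ P).trans (StableQuot.mk_eq_zero_of_mem hP)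
  refine Set.Subset.antisymm (fun A hA => ?_) fun A hA =>
    AddSubgroup.subset_closure ⟨A, hA, rfl⟩
  exact StableQuot.mem_of_mk_eq_zero hcancel ((K0Ext.lift_k0clsE ξ _ _ _ A).symm.trans (hker hA))

variable (H : AddSubgroup (K0Ext C ξ))

lemma addSub_setOf_k0clsE_mem : AddSub C {A : C | k0clsE C ξ A ∈ H} :=
  ⟨by simp [k0clsE_zero], fun hA hB => by simpa [k0clsE_biprod] using H.add_mem hA hB,
    fun hA ⟨e⟩ => by rwa [Set.mem_ofPred_eq, ← k0clsE_eq_of_iso ξ e]⟩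

lemma extClosed_setOf_k0clsE_mem : ExtClosed ξ {A : C | k0clsE C ξ A ∈ H} :=
  fun _ _ _ h hA hC => by
    rw [Set.mem_ofPred_eq, ← k0clsE_add_of_real ξ h]; exact H.add_mem hA hC

lemma coconeClosed_setOf_k0clsE_mem : CoconeClosed ξ {A : C | k0clsE C ξ A ∈ H} :=
  fun _ _ _ h hB hC => by
    rw [Set.mem_ofPred_eq, eq_sub_of_add_eq (k0clsE_add_of_real ξ h)]; exact H.sub_mem hB hC

lemma coneClosed_setOf_k0clsE_mem : ConeClosed ξ {A : C | k0clsE C ξ A ∈ H} :=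
  fun _ _ _ h hA hB => by
    rw [Set.mem_ofPred_eq, eq_sub_of_add_eq' (k0clsE_add_of_real ξ h)]; exact H.sub_mem hB hA

variable {G : Set C}

lemma gResolving_setOf_k0clsE_mem (hGH : ∀ G₀ ∈ G, k0clsE C ξ G₀ ∈ H) :
    GResolving ξ G {A : C | k0clsE C ξ A ∈ H} :=
  ⟨addSub_setOf_k0clsE_mem H, extClosed_setOf_k0clsE_mem H, coconeClosed_setOf_k0clsE_mem H, hGH⟩

lemma gCoresolving_setOf_k0clsE_mem (hGH : ∀ G₀ ∈ G, k0clsE C ξ G₀ ∈ H) :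
    GCoresolving ξ G {A : C | k0clsE C ξ A ∈ H} :=
  ⟨addSub_setOf_k0clsE_mem H, extClosed_setOf_k0clsE_mem H, coneClosed_setOf_k0clsE_mem H, hGH⟩

lemma exists_k0clsE_add_eq (hG : IsGenerator ξ G ∨ IsCogenerator ξ G) (A : C) :
    ∃ G₀ ∈ G, ∃ A₁ : C, k0clsE C ξ A + k0clsE C ξ A₁ = k0clsE C ξ G₀ := by
  rcases hG with hG | hG <;> obtain ⟨G₀, hG₀, A₁, f, g, δ, h⟩ := hG A
  · exact ⟨G₀, hG₀, A₁, (add_comm _ _).trans (k0clsE_add_of_real ξ h)⟩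
  · exact ⟨G₀, hG₀, A₁, k0clsE_add_of_real ξ h⟩

variable {H}

lemma denseSub_setOf_k0clsE_mem (hG : IsGenerator ξ G ∨ IsCogenerator ξ G)
    (hGH : ∀ G₀ ∈ G, k0clsE C ξ G₀ ∈ H) : DenseSub {A : C | k0clsE C ξ A ∈ H} := fun A => by
  obtain ⟨G₀, hG₀, A₁, h⟩ := exists_k0clsE_add_eq hG A
  refine ⟨A ⊞ A₁, ?_, A₁, ⟨Iso.refl _⟩⟩
  rw [Set.mem_ofPred_eq, k0clsE_biprod, h]
  exact hGH G₀ hG₀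

lemma closure_k0clsE_image_setOf_mem (hG : IsGenerator ξ G ∨ IsCogenerator ξ G)
    (hGH : ∀ G₀ ∈ G, k0clsE C ξ G₀ ∈ H) :
    AddSubgroup.closure (k0clsE C ξ '' {A : C | k0clsE C ξ A ∈ H}) = H := by
  refine le_antisymm ((AddSubgroup.closure_le _).2 fun _ ⟨_, hA, hx⟩ => hx ▸ hA) fun x hx => ?_
  obtain ⟨A, B, rfl⟩ := exists_eq_k0clsE_sub ξ x
  obtain ⟨G₀, hG₀, B₁, hB⟩ := exists_k0clsE_add_eq hG B
  have hsplit : k0clsE C ξ (A ⊞ B₁) - k0clsE C ξ G₀ = k0clsE C ξ A - k0clsE C ξ B := by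
    rw [k0clsE_biprod, ← hB]
    abel
  have hAB₁ : k0clsE C ξ (A ⊞ B₁) ∈ H := by
    rw [sub_eq_iff_eq_add.mp hsplit]
    exact H.add_mem hx (hGH G₀ hG₀)
  rw [← hsplit]
  exact sub_mem (AddSubgroup.subset_closure ⟨_, hAB₁, rfl⟩)
    (AddSubgroup.subset_closure ⟨G₀, hGH G₀ hG₀, rfl⟩)

end Correspondence

theorem stmt14_general (C : Type u) [Category.{v} C] [Preadditive C] [HasFiniteBiproducts C]
    (ξ : ExtCat C) (G : Set C)
    (hG : IsGenerator ξ G ∨ IsCogenerator ξ G) :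
    ({X : Set C | DenseSub X ∧ GResolving ξ G X} =
      {X : Set C | DenseSub X ∧ GCoresolving ξ G X}) ∧
    (∀ X : Set C, DenseSub X → GResolving ξ G X →
        {A : C | k0clsE C ξ A ∈ AddSubgroup.closure (k0clsE C ξ '' X)} = X) ∧
    (∀ H : AddSubgroup (K0Ext C ξ), (∀ G₀ ∈ G, k0clsE C ξ G₀ ∈ H) →
        DenseSub {A : C | k0clsE C ξ A ∈ H} ∧ GResolving ξ G {A : C | k0clsE C ξ A ∈ H} ∧
          AddSubgroup.closure (k0clsE C ξ '' {A : C | k0clsE C ξ A ∈ H}) = H) := by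
  have closure_mem {X : Set C} (hGX : G ⊆ X) :
      ∀ G₀ ∈ G, k0clsE C ξ G₀ ∈ AddSubgroup.closure (k0clsE C ξ '' X) :=
    fun G₀ hG₀ => AddSubgroup.subset_closure ⟨G₀, hGX hG₀, rfl⟩
  have resolving_eq {X : Set C} (hD : DenseSub X) (hX : GResolving ξ G X) :=
    setOf_k0clsE_mem_closure_eq hD hX.1 hX.2.1 (CoconeClosed.mem_of_biprod_mem hX.2.2.1)
  have coresolving_eq {X : Set C} (hD : DenseSub X) (hX : GCoresolving ξ G X) :=
    setOf_k0clsE_mem_closure_eq hD hX.1 hX.2.1 (ConeClosed.mem_of_biprod_mem hX.2.2.1 hX.1)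
  refine ⟨Set.ext fun X => ⟨fun ⟨hD, hX⟩ => ⟨hD, ?_⟩, fun ⟨hD, hX⟩ => ⟨hD, ?_⟩⟩,
    fun X => resolving_eq, fun H hGH => ⟨denseSub_setOf_k0clsE_mem hG hGH,
      gResolving_setOf_k0clsE_mem H hGH, closure_k0clsE_image_setOf_mem hG hGH⟩⟩
  · rw [← resolving_eq hD hX]
    exact gCoresolving_setOf_k0clsE_mem _ (closure_mem hX.2.2.2)
  · rw [← coresolving_eq hD hX]
    exact gResolving_setOf_k0clsE_mem _ (closure_mem hX.2.2.2)

theorem stmt14 (C : Type u) [Category.{v} C] [Preadditive C] [HasFiniteBiproducts C]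
    [EssentiallySmall.{w} C] (ξ : ExtCat C) (G : Set C)
    (hG : IsGenerator ξ G ∨ IsCogenerator ξ G) :
    ({X : Set C | DenseSub X ∧ GResolving ξ G X} =
      {X : Set C | DenseSub X ∧ GCoresolving ξ G X}) ∧
    (∀ X : Set C, DenseSub X → GResolving ξ G X →
        {A : C | k0clsE C ξ A ∈ AddSubgroup.closure (k0clsE C ξ '' X)} = X) ∧
    (∀ H : AddSubgroup (K0Ext C ξ), (∀ G₀ ∈ G, k0clsE C ξ G₀ ∈ H) →
        DenseSub {A : C | k0clsE C ξ A ∈ H} ∧ GResolving ξ G {A : C | k0clsE C ξ A ∈ H} ∧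
          AddSubgroup.closure (k0clsE C ξ '' {A : C | k0clsE C ξ A ∈ H}) = H) :=
  stmt14_general C ξ G hG
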